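/- For natural numbers m, n, beta with m < n <= (beta-2)/2, sum_{j=0}^n (-1)^j * binom(n,j) * binom(m+j,m) * binom(beta-2-m-j, n-m-1) = 0. -/

import Mathlib

open Finset Polynomial

/-! For `j ≤ n` the factor `choose (m + j) m * choose (β - 2 - m - j) (n - m - 1)` is the value
at `j` of a polynomial of degree `n - 1` (no truncated subtraction occurs because
`m + n ≤ β - 2`). The alternating sum `∑ (-1)^j choose n j f(j)` is, up to sign, the `n`-th
forward difference of `f` at `0`, which vanishes on polynomials of degree `< n`. -/

theorem Polynomial.sum_range_neg_one_pow_mul_choose_mul_eval_eq_zero {R : Type*} [CommRing R]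
    {P : R[X]} {n : ℕ} (hP : P.natDegree < n) :
    ∑ j ∈ range (n + 1), (-1 : R) ^ j * n.choose j * P.eval (j : R) = 0 := by
  have h := congr_fun (fwdDiff_iter_eq_zero_of_degree_lt hP) 0
  rw [fwdDiff_iter_eq_sum_shift, Pi.zero_apply] at h
  rw [← mul_zero ((-1 : R) ^ n), ← h, mul_sum]
  refine sum_congr rfl fun j hj => ?_
  have hjn : j ≤ n := Nat.lt_succ_iff.mp (mem_range.mp hj)
  have hsign : (-1 : R) ^ j = (-1) ^ n * (-1) ^ (n - j) := by
    obtain ⟨d, rfl⟩ := Nat.exists_eq_add_of_le hjn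
    rw [Nat.add_sub_cancel_left, pow_add, mul_assoc, ← mul_pow, neg_one_mul, neg_neg, one_pow,
      mul_one]
  simp only [zsmul_eq_mul, nsmul_eq_mul, mul_one, zero_add]
  push_cast
  rw [hsign]
  ring

theorem Polynomial.exists_natDegree_le_eval_eq_choose_add {K : Type*} [Field K] [CharZero K]
    (a k : ℕ) :
    ∃ P : K[X], P.natDegree ≤ k ∧ ∀ j : ℕ, P.eval (j : K) = (a + j).choose k := by
  refine ⟨C (k.factorial : K)⁻¹ * (descPochhammer K k).comp (X + C (a : K)), ?_, fun j => ?_⟩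
  · refine (natDegree_C_mul_le _ _).trans (natDegree_comp_le.trans ?_)
    rw [descPochhammer_natDegree, natDegree_X_add_C, mul_one]
  · rw [Nat.cast_choose_eq_descPochhammer_div]
    simp [add_comm, div_eq_inv_mul]

theorem Polynomial.exists_natDegree_le_eval_eq_choose_sub {K : Type*} [Field K] [CharZero K]
    (N k : ℕ) :
    ∃ P : K[X], P.natDegree ≤ k ∧ ∀ j ≤ N, P.eval (j : K) = (N - j).choose k := by
  refine ⟨C (k.factorial : K)⁻¹ * (descPochhammer K k).comp (C (N : K) - X), ?_,
    fun j hj => ?_⟩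
  · refine (natDegree_C_mul_le _ _).trans (natDegree_comp_le.trans ?_)
    rw [descPochhammer_natDegree, ← neg_sub, natDegree_neg, natDegree_X_sub_C, mul_one]
  · rw [Nat.cast_choose_eq_descPochhammer_div]
    simp [Nat.cast_sub hj, div_eq_inv_mul]

/-- for natural numbers `m < n ≤ (β-2)/2`,
`∑_{j=0}^n (-1)^j * choose n j * choose (m+j) m * choose (β-2-m-j) (n-m-1) = 0`. -/
theorem romanovski_orthogonality_sum (m n β : ℕ) (hmn : m < n) (hnβ : 2 * n + 2 ≤ β) :
    (∑ j ∈ Finset.range (n + 1),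
        (-1 : ℤ) ^ j * (n.choose j : ℤ) * ((m + j).choose m : ℤ) *
          ((β - 2 - m - j).choose (n - m - 1) : ℤ)) = 0 := by
  obtain ⟨P, hP, hP_eval⟩ := exists_natDegree_le_eval_eq_choose_add (K := ℚ) m m
  obtain ⟨Q, hQ, hQ_eval⟩ :=
    exists_natDegree_le_eval_eq_choose_sub (K := ℚ) (β - 2 - m) (n - m - 1)
  have hPQ : (P * Q).natDegree < n := natDegree_mul_le.trans_lt (by omega)
  refine Int.cast_injective (α := ℚ) ?_
  rw [Int.cast_zero, ← sum_range_neg_one_pow_mul_choose_mul_eval_eq_zero hPQ]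
  push_cast
  refine sum_congr rfl fun j hj => ?_
  rw [eval_mul, hP_eval, hQ_eval j (by have := mem_range.mp hj; omega), mul_assoc]
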